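/- arXiv:1912.02919 — 4 statements merged into one kernel-verified Lean document; each statement's English description precedes it below -/
import Mathlib

section
/- Let E be a real normed vector space, let σ ≥ 0, let G, G' : ℕ → E → E be two sequences of update maps, and let D ⊆ ℕ be a set of indices such that: (i) for every t, G t is 1-expansive, i.e. ‖G t u − G t v‖ ≤ ‖u − v‖ for all u, v ∈ E; (ii) for every t ∉ D, G t = G' t; (iii) for every t ∈ D and every u ∈ E, ‖G t u − u‖ ≤ σ and ‖G' t u − u‖ ≤ σ. If w, w' : ℕ → E satisfy w 0 = w' 0, w (t+1) = G t (w t) and w' (t+1) = G' t (w' t) for all t, then for every T, ‖w T − w' T‖ ≤ 2σ · |D ∩ {0, …, T−1}|. In particular, for SGD run for k epochs on neighbouring datasets with the same seed (so that exactly one step per epoch differs) with per-step bound σ = ηL, the sensitivity is at most 2kLη. -/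
/-- **Stability of iterative updates.** If two sequences of update maps are
1-expansive, agree outside a set of indices `D`, and on `D` each map moves any
point by at most `σ`, then two runs from a common initial point stay within
`2σ · |D ∩ {0,…,T−1}|` of each other. In particular, for SGD on neighbouring
datasets with the same seed this gives the sensitivity bound `2kLη`. -/
theorem sgd_sensitivity_bound
    {E : Type*} [NormedAddCommGroup E] [NormedSpace ℝ E]
    (σ : ℝ) (hσ : 0 ≤ σ)
    (G G' : ℕ → E → E) (D : Set ℕ) [DecidablePred (· ∈ D)]
    (hexp : ∀ t, ∀ u v : E, ‖G t u - G t v‖ ≤ ‖u - v‖)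
    (hagree : ∀ t ∉ D, G t = G' t)
    (hbound : ∀ t ∈ D, ∀ u : E, ‖G t u - u‖ ≤ σ ∧ ‖G' t u - u‖ ≤ σ)
    (w w' : ℕ → E) (h0 : w 0 = w' 0)
    (hw : ∀ t, w (t + 1) = G t (w t))
    (hw' : ∀ t, w' (t + 1) = G' t (w' t)) :
    ∀ T : ℕ, ‖w T - w' T‖ ≤ 2 * σ * ((Finset.range T).filter (· ∈ D)).card := by
  intro T
  induction T with
  | zero => simp [h0]
  | succ T ih =>
    rw [Finset.range_add_one, Finset.filter_insert]
    by_cases hT : T ∈ D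
    · have h1 := (hbound T hT (w T)).1
      have h2 := (hbound T hT (w' T)).2
      have key : ‖w (T + 1) - w' (T + 1)‖ ≤ σ + ‖w T - w' T‖ + σ := by
        rw [hw, hw']
        calc ‖G T (w T) - G' T (w' T)‖
            ≤ ‖G T (w T) - w T‖ + ‖w T - w' T‖ + ‖w' T - G' T (w' T)‖ :=
              norm_sub_le_norm_sub_add_norm_sub _ _ _ |>.trans
                (by gcongr; exact norm_sub_le_norm_sub_add_norm_sub _ _ _)
          _ ≤ σ + ‖w T - w' T‖ + σ := by
              gcongr
              rw [norm_sub_rev]; exact h2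
      rw [if_pos hT, Finset.card_insert_of_notMem (by simp)]
      push_cast
      calc ‖w (T + 1) - w' (T + 1)‖ ≤ σ + ‖w T - w' T‖ + σ := key
        _ ≤ σ + 2 * σ * ((Finset.range T).filter (· ∈ D)).card + σ := by gcongr
        _ = 2 * σ * (((Finset.range T).filter (· ∈ D)).card + 1) := by ring
    · rw [if_neg hT, hw, hw', ← hagree T hT]
      exact (hexp T _ _).trans ih
end

section
/- Let E be a real inner product space, let f : E → ℝ be differentiable and convex on all of E, and suppose its gradient is Lipschitz with constant β > 0 (i.e. f is β-smooth). Then for every step size η with 0 ≤ η ≤ 2/β, the gradient update G(w) = w − η • ∇f(w) is 1-expansive: for all u, v ∈ E, ‖(u − η • ∇f(u)) − (v − η • ∇f(v))‖ ≤ ‖u − v‖. -/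
/-!
The gradient of a convex `β`-smooth function is cocoercive (Baillon–Haddad):
`‖∇f u - ∇f v‖² ≤ β ⟪∇f u - ∇f v, u - v⟫`. To see it, tilt `f` by the linear function
`w ↦ ⟪∇f u, w⟫`; the tilted function is still convex and `β`-smooth and is minimized at `u`, so one
gradient step of length `1/β` from `v` (the descent lemma) cannot go below its value at `u`,
which gives `f u + ⟪∇f u, v - u⟫ + ‖∇f v - ∇f u‖² / (2β) ≤ f v`; adding this to the same bound
with `u`, `v` swapped is cocoercivity. Expanding `‖(u - v) - η (∇f u - ∇f v)‖²`, cocoercivity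
makes the cross term dominate the quadratic one as soon as `η β ≤ 2`.
-/

open scoped NNReal
open RealInnerProductSpace InnerProductSpace AffineMap

section GradientStep

variable {E : Type*} [NormedAddCommGroup E] [InnerProductSpace ℝ E]

theorem norm_sub_smul_le_of_norm_sq_le_mul_inner {d x : E} {β η : ℝ}
    (h : ‖d‖ ^ 2 ≤ β * ⟪d, x⟫) (hβ : 0 ≤ β) (hη : 0 ≤ η) (hηβ : η * β ≤ 2) :
    ‖x - η • d‖ ≤ ‖x‖ := by
  have hinner : 0 ≤ ⟪d, x⟫ := by
    rcases hβ.eq_or_lt with rfl | hβ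
    · simp_all
    · exact nonneg_of_mul_nonneg_right ((sq_nonneg _).trans h) hβ
  refine (sq_le_sq₀ (norm_nonneg _) (norm_nonneg _)).1 ?_
  rw [norm_sub_sq_real, real_inner_smul_right, norm_smul, mul_pow, Real.norm_of_nonneg hη,
    real_inner_comm]
  nlinarith [mul_le_mul_of_nonneg_left h (sq_nonneg η),
    mul_le_mul_of_nonneg_right hηβ (mul_nonneg hη hinner)]

variable {f : E → ℝ} {g : E → E} {β : ℝ≥0}

theorem LipschitzWith.inner_sub_lineMap_le (hg : LipschitzWith β g) (x y : E) {t : ℝ}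
    (ht : 0 ≤ t) : ⟪g (lineMap x y t) - g x, y - x⟫ ≤ β * t * ‖y - x‖ ^ 2 :=
  calc ⟪g (lineMap x y t) - g x, y - x⟫ ≤ ‖g (lineMap x y t) - g x‖ * ‖y - x‖ :=
        real_inner_le_norm _ _
    _ ≤ β * ‖lineMap x y t - x‖ * ‖y - x‖ := by
        gcongr; exact hg.norm_sub_le _ _
    _ = β * t * ‖y - x‖ ^ 2 := by
        rw [lineMap_apply_module', add_sub_cancel_right, norm_smul, Real.norm_of_nonneg ht]
        ring

variable [CompleteSpace E]

theorem HasGradientAt.hasDerivAt_comp_lineMap {g' x y : E} {t : ℝ}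
    (h : HasGradientAt f g' (lineMap x y t)) :
    HasDerivAt (fun s => f (lineMap x y s)) ⟪g', y - x⟫ t :=
  (hasGradientAt_iff_hasFDerivAt.1 h).comp_hasDerivAt t hasDerivAt_lineMap

theorem ConvexOn.inner_sub_le_of_hasGradientAt (hf : ConvexOn ℝ Set.univ f) {g' x : E}
    (h : HasGradientAt f g' x) (y : E) : ⟪g', y - x⟫ ≤ f y - f x := by
  have hline : ConvexOn ℝ Set.univ (fun t : ℝ => f (lineMap x y t)) :=
    hf.comp_affineMap (lineMap x y)
  have hderiv := HasGradientAt.hasDerivAt_comp_lineMap (t := 0) (y := y) (by simpa using h)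
  simpa [slope_def_field] using
    hline.le_slope_of_hasDerivAt (Set.mem_univ 0) (Set.mem_univ 1) one_pos hderiv

theorem le_add_inner_add_norm_sq_of_lipschitzWith (hgrad : ∀ z, HasGradientAt f (g z) z)
    (hg : LipschitzWith β g) (x y : E) :
    f y ≤ f x + ⟪g x, y - x⟫ + β / 2 * ‖y - x‖ ^ 2 := by
  set φ : ℝ → ℝ := fun t => f (lineMap x y t) - f x - t * ⟪g x, y - x⟫
  set B : ℝ → ℝ := fun t => β / 2 * ‖y - x‖ ^ 2 * t ^ 2
  have hφ (t : ℝ) : HasDerivAt φ ⟪g (lineMap x y t) - g x, y - x⟫ t := by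
    rw [inner_sub_left]
    simpa using
      (((hgrad _).hasDerivAt_comp_lineMap).sub_const (f x)).fun_sub ((hasDerivAt_id t).mul_const _)
  have hB (t : ℝ) : HasDerivAt B (β * t * ‖y - x‖ ^ 2) t := by
    refine ((hasDerivAt_pow 2 t).const_mul (β / 2 * ‖y - x‖ ^ 2)).congr_deriv ?_
    push_cast
    ring
  have key := image_le_of_deriv_right_le_deriv_boundary
    (fun t _ => (hφ t).continuousAt.continuousWithinAt) (fun t _ => (hφ t).hasDerivWithinAt)
    (by simp [φ, B]) (fun t _ => (hB t).continuousAt.continuousWithinAt)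
    (fun t _ => (hB t).hasDerivWithinAt)
    (fun t ht => hg.inner_sub_lineMap_le x y ht.1) (Set.right_mem_Icc.2 zero_le_one)
  simp only [φ, B, lineMap_apply_one, one_mul, one_pow, mul_one] at key
  linarith

/-- For `β = 0` both `β⁻¹` and the division are junk `0`, and this reads `f x ≤ f x`. -/
theorem apply_sub_inv_smul_le (hgrad : ∀ z, HasGradientAt f (g z) z)
    (hg : LipschitzWith β g) (x : E) :
    f (x - (β : ℝ)⁻¹ • g x) ≤ f x - ‖g x‖ ^ 2 / (2 * β) := by
  have := le_add_inner_add_norm_sq_of_lipschitzWith hgrad hg x (x - (β : ℝ)⁻¹ • g x)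
  rw [sub_sub_cancel_left, inner_neg_right, real_inner_smul_right, norm_neg, norm_smul,
    real_inner_self_eq_norm_sq, Real.norm_of_nonneg (by positivity)] at this
  rcases eq_or_ne (β : ℝ) 0 with h | h
  · simp_all
  · convert this using 1; field_simp; ring

theorem ConvexOn.add_inner_add_norm_sq_le (hf : ConvexOn ℝ Set.univ f)
    (hgrad : ∀ z, HasGradientAt f (g z) z) (hg : LipschitzWith β g) (u v : E) :
    f u + ⟪g u, v - u⟫ + ‖g v - g u‖ ^ 2 / (2 * β) ≤ f v := by
  set F : E → ℝ := fun w => f w - ⟪g u, w⟫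
  have hFgrad (z : E) : HasGradientAt F (g z - g u) z := by
    rw [hasGradientAt_iff_hasFDerivAt, map_sub]
    exact (hasGradientAt_iff_hasFDerivAt.1 (hgrad z)).sub (toDual ℝ E (g u)).hasFDerivAt
  have hFlip : LipschitzWith β fun w => g w - g u := by
    simpa [LipschitzWith, edist_sub_right] using hg
  have hFconv : ConvexOn ℝ Set.univ F := hf.sub ((innerₛₗ ℝ (g u)).concaveOn convex_univ)
  have hmin (w : E) : F u ≤ F w := by
    simpa using hFconv.inner_sub_le_of_hasGradientAt (hFgrad u) w
  have := (hmin _).trans (apply_sub_inv_smul_le hFgrad hFlip v)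
  simp only [F] at this
  rw [inner_sub_right]
  linarith

theorem ConvexOn.norm_sq_sub_le_mul_inner (hf : ConvexOn ℝ Set.univ f)
    (hgrad : ∀ z, HasGradientAt f (g z) z) (hg : LipschitzWith β g) (u v : E) :
    ‖g u - g v‖ ^ 2 ≤ β * ⟪g u - g v, u - v⟫ := by
  rcases eq_or_ne β 0 with rfl | hβ
  · simpa [sub_eq_zero] using hg.norm_sub_le u v
  have huv := hf.add_inner_add_norm_sq_le hgrad hg u v
  have hvu := hf.add_inner_add_norm_sq_le hgrad hg v u
  rw [norm_sub_rev] at huv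
  have key : ‖g u - g v‖ ^ 2 / (2 * β) ≤ ⟪g u - g v, u - v⟫ / 2 := by
    rw [inner_sub_right] at huv hvu
    rw [inner_sub_left, inner_sub_right, inner_sub_right]
    linarith
  rw [div_le_iff₀ (by positivity)] at key
  linarith

end GradientStep

theorem gradient_update_one_expansive_general
    {E : Type*} [NormedAddCommGroup E] [InnerProductSpace ℝ E] [CompleteSpace E]
    (f : E → ℝ) (β : ℝ≥0)
    (hdiff : Differentiable ℝ f)
    (hconv : ConvexOn ℝ Set.univ f)
    (hsmooth : LipschitzWith β (gradient f))
    (η : ℝ) (hη0 : 0 ≤ η) (hη : η ≤ 2 / β) :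
    ∀ u v : E,
      ‖(u - η • gradient f u) - (v - η • gradient f v)‖ ≤ ‖u - v‖ := by
  intro u v
  have hηβ : η * β ≤ 2 := by
    rcases eq_or_ne β 0 with rfl | hβ
    · simp
    · exact (le_div_iff₀ (by positivity)).1 hη
  have hcoco := hconv.norm_sq_sub_le_mul_inner (fun z => (hdiff z).hasGradientAt) hsmooth u v
  rw [show u - η • gradient f u - (v - η • gradient f v)
      = u - v - η • (gradient f u - gradient f v) by rw [smul_sub]; abel]
  exact norm_sub_smul_le_of_norm_sq_le_mul_inner hcoco β.coe_nonneg hη0 hηβ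

/-- **Expansiveness of the gradient update.** If `f` is differentiable, convex
on all of `E`, and `β`-smooth (its gradient is `β`-Lipschitz), then for any
step size `0 ≤ η ≤ 2/β` the gradient update `w ↦ w − η • ∇f w` is
1-expansive. -/
theorem gradient_update_one_expansive
    {E : Type*} [NormedAddCommGroup E] [InnerProductSpace ℝ E] [CompleteSpace E]
    (f : E → ℝ) (β : ℝ≥0) (hβ : 0 < β)
    (hdiff : Differentiable ℝ f)
    (hconv : ConvexOn ℝ Set.univ f)
    (hsmooth : LipschitzWith β (gradient f))
    (η : ℝ) (hη0 : 0 ≤ η) (hη : η ≤ 2 / β) :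
    ∀ u v : E,
      ‖(u - η • gradient f u) - (v - η • gradient f v)‖ ≤ ‖u - v‖ :=
  gradient_update_one_expansive_general f β hdiff hconv hsmooth η hη0 hη
end

section
/- Let E be a real inner product space and let f : E → ℝ be differentiable, convex on all of E, and β-smooth for some β > 0 (i.e. ∇f is Lipschitz with constant β). Then the gradient of f is (1/β)-co-coercive: for all u, v ∈ E, ⟪∇f(u) − ∇f(v), u − v⟫ ≥ (1/β) · ‖∇f(u) − ∇f(v)‖². -/
/-!
Comparing, at the point `w = v - β⁻¹ • (∇f v - ∇f u)`, the tangent lower bound of the convex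
function `f` at `u` with the quadratic upper bound of the descent lemma at `v` gives
`f u + ⟪∇f u, v - u⟫ + ‖∇f v - ∇f u‖² / (2β) ≤ f v`.
Adding this to the same inequality with `u` and `v` exchanged yields co-coercivity.
-/

open scoped NNReal RealInnerProductSpace Gradient

section

variable {E : Type*} [NormedAddCommGroup E] [InnerProductSpace ℝ E] [CompleteSpace E]
  {f : E → ℝ}

theorem DifferentiableAt.hasDerivAt_comp_add_smul {x d : E} {t : ℝ}
    (hf : DifferentiableAt ℝ f (x + t • d)) :
    HasDerivAt (fun s : ℝ ↦ f (x + s • d)) ⟪∇ f (x + t • d), d⟫ t := by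
  have hline : HasDerivAt (fun s : ℝ ↦ x + s • d) d t := by
    simpa using ((hasDerivAt_id t).smul_const d).const_add x
  exact (hf.hasFDerivAt.comp_hasDerivAt t hline).congr_deriv inner_gradient_left.symm

theorem ConvexOn.add_inner_gradient_le {s : Set E} (hf : ConvexOn ℝ s f) {u v : E}
    (hu : u ∈ s) (hv : v ∈ s) (hfu : DifferentiableAt ℝ f u) :
    f u + ⟪∇ f u, v - u⟫ ≤ f v := by
  have hline : ConvexOn ℝ (Set.Icc 0 1) (fun t : ℝ ↦ f (u + t • (v - u))) := by
    have hsub : Set.Icc (0 : ℝ) 1 ⊆ AffineMap.lineMap u v ⁻¹' s := fun t ht ↦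
      hf.1.lineMap_mem hu hv ⟨ht.1, ht.2⟩
    have hcomp : f ∘ AffineMap.lineMap u v = fun t : ℝ ↦ f (u + t • (v - u)) := by
      ext t
      simp [AffineMap.lineMap_apply_module', add_comm]
    exact hcomp ▸ (hf.comp_affineMap (AffineMap.lineMap u v)).subset hsub (convex_Icc 0 1)
  have hslope := hline.le_slope_of_hasDerivAt (by simp) (by simp) one_pos
    (DifferentiableAt.hasDerivAt_comp_add_smul (d := v - u) (by simpa using hfu))
  simp only [zero_smul, add_zero, one_smul, slope_def_field, sub_zero, div_one,
    add_sub_cancel] at hslope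
  linarith

theorem le_add_inner_gradient_add_of_lipschitzWith_gradient {β : ℝ≥0}
    (hf : Differentiable ℝ f) (hβ : LipschitzWith β (∇ f)) (x y : E) :
    f y ≤ f x + ⟪∇ f x, y - x⟫ + β / 2 * ‖y - x‖ ^ 2 := by
  set d := y - x
  have hderiv (t : ℝ) : HasDerivAt (fun s : ℝ ↦ f (x + s • d)) ⟪∇ f (x + t • d), d⟫ t :=
    (hf _).hasDerivAt_comp_add_smul
  have hmodel (t : ℝ) :
      HasDerivAt (fun s : ℝ ↦ f x + s * ⟪∇ f x, d⟫ + β / 2 * s ^ 2 * ‖d‖ ^ 2)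
        (⟪∇ f x, d⟫ + β * t * ‖d‖ ^ 2) t :=
    ((((hasDerivAt_id' t).mul_const _).const_add _).add
      (((hasDerivAt_pow 2 t).const_mul _).mul_const _)).congr_deriv
      (by simp only [one_mul, Nat.cast_ofNat]; ring)
  have hbound (t : ℝ) (ht : 0 ≤ t) :
      ⟪∇ f (x + t • d), d⟫ ≤ ⟪∇ f x, d⟫ + β * t * ‖d‖ ^ 2 :=
    calc ⟪∇ f (x + t • d), d⟫ = ⟪∇ f x, d⟫ + ⟪∇ f (x + t • d) - ∇ f x, d⟫ := by
          rw [inner_sub_left]; ring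
      _ ≤ ⟪∇ f x, d⟫ + ‖∇ f (x + t • d) - ∇ f x‖ * ‖d‖ := by
          gcongr; exact real_inner_le_norm _ _
      _ ≤ ⟪∇ f x, d⟫ + β * ‖t • d‖ * ‖d‖ := by
          gcongr; simpa using hβ.norm_sub_le (x + t • d) x
      _ = ⟪∇ f x, d⟫ + β * t * ‖d‖ ^ 2 := by
          rw [norm_smul, Real.norm_of_nonneg ht]; ring
  have := image_le_of_deriv_right_le_deriv_boundary (a := 0) (b := 1)
    (fun t _ ↦ (hderiv t).continuousAt.continuousWithinAt)
    (fun t _ ↦ (hderiv t).hasDerivWithinAt) (by simp)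
    (fun t _ ↦ (hmodel t).continuousAt.continuousWithinAt)
    (fun t _ ↦ (hmodel t).hasDerivWithinAt) (fun t ht ↦ hbound t ht.1)
    (Set.right_mem_Icc.2 zero_le_one)
  simpa [d] using this

theorem add_inner_gradient_add_norm_sq_div_le {β : ℝ≥0} (hf : Differentiable ℝ f)
    (hconv : ConvexOn ℝ Set.univ f) (hβ : LipschitzWith β (∇ f)) (u v : E) :
    f u + ⟪∇ f u, v - u⟫ + ‖∇ f v - ∇ f u‖ ^ 2 / (2 * β) ≤ f v := by
  set g := ∇ f v - ∇ f u
  set w := v - (β : ℝ)⁻¹ • g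
  have hlower : f u + ⟪∇ f u, w - u⟫ ≤ f w :=
    hconv.add_inner_gradient_le trivial trivial (hf u)
  have hupper : f w ≤ f v + ⟪∇ f v, w - v⟫ + β / 2 * ‖w - v‖ ^ 2 :=
    le_add_inner_gradient_add_of_lipschitzWith_gradient hf hβ v w
  have hwu : w - u = (v - u) - (β : ℝ)⁻¹ • g := by simp only [w]; abel
  have hwv : w - v = -((β : ℝ)⁻¹ • g) := by simp only [w]; abel
  have hgg : ⟪∇ f v, g⟫ - ⟪∇ f u, g⟫ = ‖g‖ ^ 2 := by
    rw [← inner_sub_left, real_inner_self_eq_norm_sq]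
  -- holds also for `β = 0`, so no case split on `β` is needed
  have hcoef : (β : ℝ)⁻¹ * β * (β : ℝ)⁻¹ = (β : ℝ)⁻¹ := by
    simpa using mul_inv_mul_cancel (β : ℝ)⁻¹
  have hsum : ⟪∇ f v, w - v⟫ - ⟪∇ f u, w - u⟫ + β / 2 * ‖w - v‖ ^ 2 =
      -⟪∇ f u, v - u⟫ - ‖g‖ ^ 2 / (2 * β) := by
    rw [hwu, hwv, inner_neg_right, inner_sub_right, real_inner_smul_right,
      real_inner_smul_right, norm_neg, norm_smul, Real.norm_of_nonneg (by positivity)]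
    linear_combination (-(β : ℝ)⁻¹) * hgg + ‖g‖ ^ 2 / 2 * hcoef
  linarith

end

theorem gradient_cocoercive_general
    {E : Type*} [NormedAddCommGroup E] [InnerProductSpace ℝ E] [CompleteSpace E]
    (f : E → ℝ) (β : ℝ≥0)
    (hdiff : Differentiable ℝ f)
    (hconv : ConvexOn ℝ Set.univ f)
    (hsmooth : LipschitzWith β (gradient f)) :
    ∀ u v : E,
      (1 / (β : ℝ)) * ‖gradient f u - gradient f v‖ ^ 2 ≤
        ⟪gradient f u - gradient f v, u - v⟫ := by
  intro u v
  have huv := add_inner_gradient_add_norm_sq_div_le hdiff hconv hsmooth u v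
  have hvu := add_inner_gradient_add_norm_sq_div_le hdiff hconv hsmooth v u
  rw [norm_sub_rev] at huv
  have hinner : ⟪∇ f u - ∇ f v, u - v⟫ = -⟪∇ f u, v - u⟫ - ⟪∇ f v, u - v⟫ := by
    rw [inner_sub_left, ← inner_neg_right, neg_sub]
  have hcoef : 1 / (β : ℝ) * ‖∇ f u - ∇ f v‖ ^ 2 = 2 * (‖∇ f u - ∇ f v‖ ^ 2 / (2 * β)) := by
    ring
  linarith

/-- **Baillon–Haddad co-coercivity.** If `f` is differentiable, convex on all
of `E`, and `β`-smooth (its gradient is `β`-Lipschitz) for some `β > 0`, then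
the gradient of `f` is `(1/β)`-co-coercive:
`⟪∇f u − ∇f v, u − v⟫ ≥ (1/β) ‖∇f u − ∇f v‖²`. -/
theorem gradient_cocoercive
    {E : Type*} [NormedAddCommGroup E] [InnerProductSpace ℝ E] [CompleteSpace E]
    (f : E → ℝ) (β : ℝ≥0) (hβ : 0 < β)
    (hdiff : Differentiable ℝ f)
    (hconv : ConvexOn ℝ Set.univ f)
    (hsmooth : LipschitzWith β (gradient f)) :
    ∀ u v : E,
      (1 / (β : ℝ)) * ‖gradient f u - gradient f v‖ ^ 2 ≤
        ⟪gradient f u - gradient f v, u - v⟫ :=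
  gradient_cocoercive_general f β hdiff hconv hsmooth
end

section
/- For every fixed natural number j, the probability that a uniformly random permutation of a set of N elements has exactly j fixed points converges, as N → ∞, to the Poisson(1) probability e^{−1}/j!; that is, (number of permutations of an N-element set with exactly j fixed points)/N! → e^{−1}/j! as N → ∞. -/
/-!
A permutation whose fixed-point set is exactly `s` is a derangement of the complement of `s`.
Choosing the `j` fixed points therefore gives `D_{N,j} = C(N, j) · D_{N-j}`, so
`D_{N,j} / N! = (D_{N-j} / (N-j)!) / j!`, while `D_n / n!` is a partial sum of the series of `e⁻¹`.
-/

open Filter Finset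

section FixedPoints

variable {α : Type*} [Fintype α] [DecidableEq α]

theorem card_perm_filter_fixedPoints_eq (s : Finset α) :
    #{π : Equiv.Perm α | ({i | π i = i} : Finset α) = s}
      = numDerangements (Fintype.card α - #s) := by
  have hfib : ∀ π : Equiv.Perm α,
      ({i | π i = i} : Finset α) = s ↔ ∀ a, ¬a ∉ s ↔ a ∈ Function.fixedPoints π := by
    intro π
    simp only [Finset.ext_iff, mem_filter, mem_univ, true_and, not_not,
      Function.mem_fixedPoints, Function.IsFixedPt]
    exact forall_congr' fun _ => Iff.comm
  rw [← Fintype.card_subtype, Fintype.card_congr (Equiv.subtypeEquivRight hfib),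
    ← Fintype.card_congr (derangements.subtypeEquiv _), card_derangements_eq_numDerangements,
    Fintype.card_subtype_compl, Fintype.card_coe]

theorem card_perm_card_fixedPoints_eq (j : ℕ) :
    #{π : Equiv.Perm α | #{i | π i = i} = j}
      = (Fintype.card α).choose j * numDerangements (Fintype.card α - j) := by
  rw [card_eq_sum_card_fiberwise (f := fun π : Equiv.Perm α => ({i | π i = i} : Finset α))
      (t := univ.powersetCard j) (fun π hπ => by simpa [mem_powersetCard] using hπ),
    sum_const_nat (m := numDerangements (Fintype.card α - j)) ?_, card_powersetCard, card_univ]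
  intro s hs
  rw [mem_powersetCard] at hs
  rw [filter_filter, ← hs.2, ← card_perm_filter_fixedPoints_eq]
  congr 1
  exact filter_congr fun π _ => ⟨And.right, fun h => ⟨h ▸ rfl, h⟩⟩

end FixedPoints

/-- **Poisson limit for fixed points of random permutations.** For every fixed
`j`, the probability that a uniformly random permutation of an `N`-element set
has exactly `j` fixed points tends to `e⁻¹ / j!` as `N → ∞`. -/
theorem fixedPoints_tendsto_poisson (j : ℕ) :
    Tendsto
      (fun N : ℕ =>
        ((Finset.univ.filter fun π : Equiv.Perm (Fin N) =>
            (Finset.univ.filter fun i => π i = i).card = j).card : ℝ)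
          / (Nat.factorial N : ℝ))
      atTop
      (nhds (Real.exp (-1) / (Nat.factorial j : ℝ))) := by
  refine ((numDerangements_tendsto_inv_e.comp (tendsto_sub_atTop_nat j)).div_const _).congr' ?_
  filter_upwards [eventually_ge_atTop j] with N hN
  rw [Function.comp_apply, card_perm_card_fixedPoints_eq, Fintype.card_fin, Nat.cast_mul,
    Nat.cast_choose ℝ hN]
  field_simp [Nat.factorial_ne_zero]
end
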